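/- arXiv:1804.06703 — 2 statements merged into one kernel-verified Lean document; each statement's English description precedes it below -/
import Mathlib

section
/- In an IC structure without outer cycles (satisfying all four conditions of the IC structure definition), conditions c1 and c2 hold automatically: for every inner vertex i, every non-inner vertex j at depth ≥ 2 in the rooted tree T_i has a_{i,j} odd, and every vertex j outside T_i has b_{i,j} = 0. -/
open scoped BigOperators

variable {V : Type*}

/-- `l` is a directed path in the digraph `E`. -/
def IsDiPath (E : V → V → Prop) (l : List V) : Prop :=
  l.Chain' E ∧ l.Nodup

/-- `l` is a directed cycle in the digraph `E`. -/
def IsDiCycle (E : V → V → Prop) (l : List V) : Prop :=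
  2 ≤ l.length ∧ l.Nodup ∧ l.Chain' E ∧
    ∀ h : l ≠ [], E (l.getLast h) (l.head h)

/-- `u` and `w` occur consecutively in the list `l`. -/
def ConsecIn (l : List V) (u w : V) : Prop :=
  ∃ l₁ l₂, l = l₁ ++ u :: w :: l₂

/-- `u → w` is an edge of the cycle represented by `l` (including the closing edge). -/
def CycleEdge (l : List V) (u w : V) : Prop :=
  ConsecIn l u w ∨ ∃ h : l ≠ [], l.getLast h = u ∧ l.head h = w

/-- `l` is an I-path from the inner vertex `a` to the inner vertex `b`:
a directed path from `a` to `b` passing through no other inner vertex. -/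
def IsIPath (E : V → V → Prop) (inner : Set V) (a b : V) (l : List V) : Prop :=
  IsDiPath E l ∧ l.head? = some a ∧ l.getLast? = some b ∧
    ∀ v ∈ l, v ∈ inner → v = a ∨ v = b

/-- `l` is an I-cycle: a directed cycle containing exactly one inner vertex. -/
def IsICycle (E : V → V → Prop) (inner : Set V) (l : List V) : Prop :=
  IsDiCycle E l ∧ ∃! v, v ∈ l ∧ v ∈ inner

/-- IC-structure conditions: no I-cycle, and a unique I-path between any
two distinct inner vertices. -/
def ICStructure (E : V → V → Prop) (inner : Set V) : Prop :=
  (∀ l : List V, ¬ IsICycle E inner l) ∧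
  ∀ a ∈ inner, ∀ b ∈ inner, a ≠ b → ∃! l : List V, IsIPath E inner a b l

/-- An outer cycle: a directed cycle all of whose vertices are non-inner. -/
def IsOuterCycle (E : V → V → Prop) (inner : Set V) (l : List V) : Prop :=
  IsDiCycle E l ∧ ∀ v ∈ l, v ∉ inner

/-- Edge relation of the outer-cycle group of `j`: union of all outer
cycles containing `j`. -/
def OCGEdge (E : V → V → Prop) (inner : Set V) (j u w : V) : Prop :=
  ∃ l, IsOuterCycle E inner l ∧ j ∈ l ∧ CycleEdge l u w

/-- Vertex set of the outer-cycle group of `j`. -/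
def OCGVert (E : V → V → Prop) (inner : Set V) (j : V) : Set V :=
  {v | ∃ l, IsOuterCycle E inner l ∧ j ∈ l ∧ v ∈ l}

/-- Edge relation of the rooted tree `T i` of the inner vertex `i`
(the union of all I-paths starting at `i`). -/
def TreeEdge (E : V → V → Prop) (inner : Set V) (i u w : V) : Prop :=
  ∃ b ∈ inner, b ≠ i ∧ ∃ l, IsIPath E inner i b l ∧ ConsecIn l u w

/-- Vertex set of the rooted tree `T i` of the inner vertex `i`. -/
def TreeVert (E : V → V → Prop) (inner : Set V) (i : V) : Set V :=
  {v | ∃ b ∈ inner, b ≠ i ∧ ∃ l, IsIPath E inner i b l ∧ v ∈ l}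

/-- Non-inner vertices of the rooted tree `T i`. -/
def VNI (E : V → V → Prop) (inner : Set V) (i : V) : Set V :=
  TreeVert E inner i \ inner

/-- Vertices lying on some outer cycle. -/
def VOC (E : V → V → Prop) (inner : Set V) : Set V :=
  {v | ∃ c, IsOuterCycle E inner c ∧ v ∈ c}

/-- `N⁺_C(j)`: out-neighborhood of `j` restricted to its outer-cycle group. -/
def NCout (E : V → V → Prop) (inner : Set V) (j : V) : Set V :=
  {q | q ∈ OCGVert E inner j ∧ E j q}

/-- Two non-inner vertices have the same outer-cycle group. -/
def SameOCG (E : V → V → Prop) (inner : Set V) (j j' : V) : Prop :=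
  OCGEdge E inner j = OCGEdge E inner j'

/-- The outer-cycle group of `j` is a proper subgraph of that of `j'`. -/
def OCGProperSub (E : V → V → Prop) (inner : Set V) (j j' : V) : Prop :=
  (∀ u w, OCGEdge E inner j u w → OCGEdge E inner j' u w) ∧ ¬ SameOCG E inner j j'

/-- In-degree of `u` inside the outer-cycle group of `j`. -/
noncomputable def inDegOCG (E : V → V → Prop) (inner : Set V) (j u : V) : ℕ :=
  Set.ncard {w | OCGEdge E inner j w u}

/-- `j₁` is the central cycle vertex (CCV) of a maximal outer-cycle group (MOCG):
non-inner, lying on at least two distinct outer cycles, its outer-cycle group is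
not a proper subgraph of any other one, and it has strictly largest in-degree
among the vertices sharing its outer-cycle group. -/
def IsCCV (E : V → V → Prop) (inner : Set V) (j₁ : V) : Prop :=
  j₁ ∉ inner ∧
  (∃ c₁ c₂, IsOuterCycle E inner c₁ ∧ IsOuterCycle E inner c₂ ∧ j₁ ∈ c₁ ∧ j₁ ∈ c₂ ∧
    ({x | x ∈ c₁} : Set V) ≠ {x | x ∈ c₂}) ∧
  (∀ j', j' ∉ inner → ¬ OCGProperSub E inner j₁ j') ∧
  (∀ j', j' ∉ inner → SameOCG E inner j' j₁ →
    j' = j₁ ∨ inDegOCG E inner j₁ j' < inDegOCG E inner j₁ j₁)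

/-- Pre-central cycle vertex set of `j₁`: vertices of its MOCG having `j₁` as
out-neighbor within the MOCG. -/
def PreC (E : V → V → Prop) (inner : Set V) (j₁ : V) : Set V :=
  {w | OCGEdge E inner j₁ w j₁}

/-- Number of outer cycles (identified by their vertex sets) in the
outer-cycle group of `j₁`. -/
noncomputable def numOC (E : V → V → Prop) (inner : Set V) (j₁ : V) : ℕ :=
  Set.ncard {s : Set V | ∃ c, IsOuterCycle E inner c ∧ j₁ ∈ c ∧ s = {x | x ∈ c}}

/-- The MOCG with CCV `j₁` is isolated: none of its outer cycles belongs to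
another MOCG. -/
def IsolatedCCV (E : V → V → Prop) (inner : Set V) (j₁ : V) : Prop :=
  IsCCV E inner j₁ ∧ ∀ c, IsOuterCycle E inner c → j₁ ∈ c →
    ∀ j₂, IsCCV E inner j₂ → j₂ ∈ c → SameOCG E inner j₂ j₁

/-- Non-inner vertices of `T i` lying on outer cycles. -/
def VNIC (E : V → V → Prop) (inner : Set V) (i : V) : Set V :=
  {v | v ∈ VNI E inner i ∧ v ∈ VOC E inner}

/-- `V'_NI(i)`: union of the outer-cycle groups of the vertices of `VNIC i`. -/
def VNI' (E : V → V → Prop) (inner : Set V) (i : V) : Set V :=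
  {v | ∃ j ∈ VNIC E inner i, v ∈ OCGVert E inner j}

/-! Loops are excluded by (3), and outer cycles by hypothesis, so every closed walk meets an
inner vertex (shorten at a repeated vertex until a cycle appears). Consequently a walk between
inner vertices whose interior avoids inner vertices repeats no vertex, and it cannot end where it
starts, since it would then be an I-cycle: it is an I-path.

If `v` is a non-inner vertex of `T i` with `v → j`, splice the I-path from `i` to `v`, the edge
`v → j`, and the part after `j` of an I-path through `j` (which exists by (3)). This is an I-path
from `i`, so `j ∈ T i`, which is c2. If `j` has depth at least 2 on the I-path `Q` from `i` to `c`,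
splicing with the tail of `Q` gives an I-path from `i` to `c`. By uniqueness it is `Q`, so `v` is
the parent of `j` on `Q` and `a i j = 1`, which is c1. -/

theorem List.exists_eq_append_cons_append_cons_of_not_nodup {α : Type*} :
    ∀ {l : List α}, ¬ l.Nodup → ∃ x l₁ l₂ l₃, l = l₁ ++ x :: l₂ ++ x :: l₃
  | [], h => absurd List.nodup_nil h
  | a :: l, h => by
    rw [List.nodup_cons, not_and_or, not_not] at h
    rcases h with ha | hl
    · obtain ⟨l₂, l₃, rfl⟩ := List.append_of_mem ha
      exact ⟨a, [], l₂, l₃, rfl⟩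
    · obtain ⟨x, l₁, l₂, l₃, rfl⟩ := exists_eq_append_cons_append_cons_of_not_nodup hl
      exact ⟨x, a :: l₁, l₂, l₃, rfl⟩

section

variable {E : V → V → Prop} {inner : Set V}

theorem ConsecIn.ne {l : List V} {u w : V} (h : ConsecIn l u w) (hl : l.Nodup) : u ≠ w := by
  obtain ⟨l₁, l₂, rfl⟩ := h
  rintro rfl
  have := (List.nodup_append.1 hl).2.1
  simp at this

theorem irrefl_of_forall_treeEdge (h3 : ∀ u w, E u w → ∃ i ∈ inner, TreeEdge E inner i u w)
    (x : V) : ¬ E x x := fun hx => by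
  obtain ⟨_, _, _, _, _, l, hl, hxx⟩ := h3 x x hx
  exact hxx.ne hl.1.2 rfl

theorem isDiCycle_of_isChain_cons_append_singleton {x : V} {m : List V} (hm : m ≠ [])
    (hnd : (x :: m).Nodup) (h : (x :: m ++ [x]).IsChain E) : IsDiCycle E (x :: m) := by
  refine ⟨?_, hnd, h.prefix ⟨[x], rfl⟩, fun _ => h.rel_getLast_head_of_append _ (by simp)⟩
  simpa [Nat.succ_le_succ_iff, Nat.one_le_iff_ne_zero] using hm

theorem exists_mem_inner_of_isChain_closed (hirr : ∀ x, ¬ E x x)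
    (hout : ∀ l, ¬ IsOuterCycle E inner l) {x : V} {m : List V}
    (hm : (x :: m ++ [x]).IsChain E) : ∃ y ∈ x :: m, y ∈ inner := by
  induction h : m.length using Nat.strong_induction_on generalizing x m with
  | _ n ih =>
  by_contra! hni
  by_cases hnd : (x :: m).Nodup
  · rcases eq_or_ne m [] with rfl | hne
    · exact hirr x (by simpa using hm)
    · exact hout _ ⟨isDiCycle_of_isChain_cons_append_singleton hne hnd hm, hni⟩
  · obtain ⟨z, l₁, l₂, l₃, hdec⟩ := List.exists_eq_append_cons_append_cons_of_not_nodup hnd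
    have hlen : l₂.length < n := by
      have := congrArg List.length hdec
      simp only [List.length_cons, List.length_append] at this
      omega
    have hsub : z :: l₂ ⊆ x :: m := hdec ▸ List.IsInfix.subset ⟨l₁, z :: l₃, by simp⟩
    have hcyc : (z :: l₂ ++ [z]).IsChain E := hm.infix ⟨l₁, l₃ ++ [x], by rw [hdec]; simp⟩
    obtain ⟨y, hy, hyi⟩ := ih _ hlen hcyc rfl
    exact hni y (hsub hy) hyi

theorem IsIPath.exists_eq_cons_append_singleton {a b : V} {l : List V}
    (hl : IsIPath E inner a b l) (hab : a ≠ b) :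
    ∃ m, l = a :: m ++ [b] ∧ ∀ y ∈ m, y ∉ inner := by
  obtain ⟨⟨-, hnd⟩, hhead, hlast, hinner⟩ := hl
  obtain ⟨t, rfl⟩ := List.head?_eq_some_iff.1 hhead
  rcases List.eq_nil_or_concat t with rfl | ⟨m, c, rfl⟩
  · exact absurd (by simpa using hlast) hab
  · rw [List.concat_eq_append, ← List.cons_append, List.getLast?_concat] at hlast
    obtain rfl : c = b := Option.some_injective _ hlast
    refine ⟨m, by simp, fun y hy hyi => ?_⟩
    simp only [List.concat_eq_append, List.nodup_cons, List.nodup_append] at hnd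
    rcases hinner y (by simp [hy]) hyi with rfl | rfl
    · exact hnd.1 (by simp [hy])
    · exact hnd.2.2.2 y hy y (by simp) rfl

theorem isIPath_of_isChain (hirr : ∀ x, ¬ E x x) (hout : ∀ l, ¬ IsOuterCycle E inner l)
    (hnoI : ∀ l, ¬ IsICycle E inner l) {a b : V} {m : List V} (ha : a ∈ inner)
    (hb : b ∈ inner) (hm : ∀ y ∈ m, y ∉ inner) (hchain : (a :: m ++ [b]).IsChain E) :
    IsIPath E inner a b (a :: m ++ [b]) ∧ a ≠ b := by
  have ham : a ∉ m := fun h => hm a h ha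
  have hbm : b ∉ m := fun h => hm b h hb
  have hmnd : m.Nodup := by
    by_contra hnd
    obtain ⟨z, l₁, l₂, l₃, rfl⟩ := List.exists_eq_append_cons_append_cons_of_not_nodup hnd
    have hcyc : (z :: l₂ ++ [z]).IsChain E := hchain.infix ⟨a :: l₁, l₃ ++ [b], by simp⟩
    obtain ⟨y, hy, hyi⟩ := exists_mem_inner_of_isChain_closed hirr hout hcyc
    exact hm y (List.IsInfix.subset ⟨l₁, z :: l₃, by simp⟩ hy) hyi
  have hab : a ≠ b := by
    rintro rfl
    rcases eq_or_ne m [] with rfl | hne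
    · exact hirr a (by simpa using hchain)
    · refine hnoI (a :: m) ⟨isDiCycle_of_isChain_cons_append_singleton hne
        (List.nodup_cons.2 ⟨ham, hmnd⟩) hchain, a, ⟨by simp, ha⟩, ?_⟩
      rintro y ⟨hy, hyi⟩
      rcases List.mem_cons.1 hy with rfl | hy
      · rfl
      · exact absurd hyi (hm y hy)
  refine ⟨⟨⟨hchain, ?_⟩, rfl, List.getLast?_concat, fun y hy hyi => ?_⟩, hab⟩
  · simp only [List.cons_append, List.nodup_cons, List.nodup_append, List.mem_append]
    grind
  · simp only [List.cons_append, List.mem_cons, List.mem_append,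
      List.not_mem_nil, or_false] at hy
    rcases hy with rfl | hy | rfl
    · exact .inl rfl
    · exact absurd hyi (hm y hy)
    · exact .inr rfl

theorem isIPath_of_isChain_of_rel (hirr : ∀ x, ¬ E x x) (hout : ∀ l, ¬ IsOuterCycle E inner l)
    (hnoI : ∀ l, ¬ IsICycle E inner l) {i v j c : V} {m₁ m₂ : List V} (hi : i ∈ inner)
    (hc : c ∈ inner) (hm₁ : ∀ y ∈ m₁ ++ [v], y ∉ inner) (hm₂ : ∀ y ∈ j :: m₂, y ∉ inner)
    (hpre : (i :: (m₁ ++ [v])).IsChain E) (hvj : E v j) (hsuf : (j :: m₂ ++ [c]).IsChain E) :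
    IsIPath E inner i c (i :: (m₁ ++ v :: j :: m₂) ++ [c]) ∧ i ≠ c := by
  refine isIPath_of_isChain hirr hout hnoI hi hc (fun y hy => ?_) ?_
  · rw [← List.singleton_append, ← List.append_assoc] at hy
    rcases List.mem_append.1 hy with hy | hy
    exacts [hm₁ y hy, hm₂ y hy]
  · simp only [List.cons_append, List.append_assoc, List.isChain_cons_append_cons_cons]
    exact ⟨hpre, hvj, hsuf⟩

theorem exists_isIPath_of_mem_VNI {i v : V} (hi : i ∈ inner) (hv : v ∈ VNI E inner i) :
    ∃ c ∈ inner, c ≠ i ∧ ∃ m₁ m₂, IsIPath E inner i c (i :: (m₁ ++ v :: m₂) ++ [c]) ∧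
      ∀ y ∈ m₁ ++ v :: m₂, y ∉ inner := by
  obtain ⟨⟨c, hc, hci, l, hl, hvl⟩, hvi⟩ := hv
  obtain ⟨m, rfl, hm⟩ := hl.exists_eq_cons_append_singleton hci.symm
  have hvm : v ∈ m := by
    simp only [List.cons_append, List.mem_cons, List.mem_append, List.not_mem_nil,
      or_false] at hvl
    rcases hvl with rfl | hvm | rfl
    exacts [absurd hi hvi, hvm, absurd hc hvi]
  obtain ⟨m₁, m₂, rfl⟩ := List.append_of_mem hvm
  exact ⟨c, hc, hci, m₁, m₂, hl, hm⟩

theorem IsIPath.isChain_prefix {i c v : V} {m₁ m₂ : List V}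
    (hl : IsIPath E inner i c (i :: (m₁ ++ v :: m₂) ++ [c])) :
    (i :: (m₁ ++ [v])).IsChain E :=
  hl.1.1.prefix ⟨m₂ ++ [c], by simp⟩

theorem IsIPath.isChain_suffix {i c v : V} {m₁ m₂ : List V}
    (hl : IsIPath E inner i c (i :: (m₁ ++ v :: m₂) ++ [c])) :
    (v :: m₂ ++ [c]).IsChain E :=
  hl.1.1.suffix ⟨i :: m₁, by simp⟩

theorem mem_treeVert_of_mem_VNI_of_rel (hirr : ∀ x, ¬ E x x)
    (hout : ∀ l, ¬ IsOuterCycle E inner l) (hnoI : ∀ l, ¬ IsICycle E inner l)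
    (h3 : ∀ u w, E u w → ∃ i ∈ inner, TreeEdge E inner i u w) {i v j : V} (hi : i ∈ inner)
    (hv : v ∈ VNI E inner i) (hvj : E v j) : j ∈ TreeVert E inner i := by
  obtain ⟨c, hc, hci, m₁, m₂, hl, hm⟩ := exists_isIPath_of_mem_VNI hi hv
  have hm₁ : ∀ y ∈ m₁ ++ [v], y ∉ inner := fun y hy =>
    hm y (List.IsPrefix.subset ⟨m₂, by simp⟩ hy)
  by_cases hj : j ∈ inner
  · have hchain : (i :: (m₁ ++ [v]) ++ [j]).IsChain E := by
      simpa using List.isChain_append_cons_cons (l₁ := i :: m₁) (l₂ := []).2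
        ⟨hl.isChain_prefix, hvj, .singleton j⟩
    obtain ⟨hp, hij⟩ := isIPath_of_isChain hirr hout hnoI hi hj hm₁ hchain
    exact ⟨j, hj, hij.symm, _, hp, by simp⟩
  · obtain ⟨i', hi', b, hb, hbi, l, hl', l₁, l₂, rfl⟩ := h3 v j hvj
    have hj' : j ∈ VNI E inner i' := ⟨⟨b, hb, hbi, _, hl', by simp⟩, hj⟩
    obtain ⟨c', hc', -, n₁, n₂, hn, hn'⟩ := exists_isIPath_of_mem_VNI hi' hj'
    obtain ⟨hp, hic'⟩ := isIPath_of_isChain_of_rel hirr hout hnoI hi hc' hm₁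
      (fun y hy => hn' y ((List.suffix_append n₁ _).subset hy)) hl.isChain_prefix hvj
      hn.isChain_suffix
    exact ⟨c', hc', hic'.symm, _, hp, by simp⟩

theorem exists_setOf_mem_VNI_rel_eq_singleton (hIC : ICStructure E inner)
    (hirr : ∀ x, ¬ E x x) (hout : ∀ l, ¬ IsOuterCycle E inner l) {i j : V} (hi : i ∈ inner)
    (hj : j ∈ VNI E inner i) (hij : ¬ TreeEdge E inner i i j) :
    ∃ u, {v | v ∈ VNI E inner i ∧ E v j} = {u} := by
  obtain ⟨c, hc, hci, m₁, m₂, hl, hm⟩ := exists_isIPath_of_mem_VNI hi hj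
  rcases List.eq_nil_or_concat m₁ with rfl | ⟨n, u, rfl⟩
  · exact absurd ⟨c, hc, hci, _, hl, [], m₂ ++ [c], by simp⟩ hij
  · simp only [List.concat_eq_append, List.append_assoc, List.singleton_append] at hl hm
    have hu : u ∈ VNI E inner i := ⟨⟨c, hc, hci, _, hl, by simp⟩, hm u (by simp)⟩
    have huj : E u j := (List.isChain_cons_cons.1 hl.isChain_suffix).1
    refine ⟨u, Set.eq_singleton_iff_unique_mem.2 ⟨⟨hu, huj⟩, fun w ⟨hw, hwj⟩ => ?_⟩⟩
    obtain ⟨c', hc', -, n₁, n₂, hn, hn'⟩ := exists_isIPath_of_mem_VNI hi hw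
    obtain ⟨hp, -⟩ := isIPath_of_isChain_of_rel hirr hout hIC.1 hi hc
      (fun y hy => hn' y (List.IsPrefix.subset ⟨n₂, by simp⟩ hy))
      (fun y hy => hm y (List.IsSuffix.subset ⟨n ++ [u], by simp⟩ hy))
      hn.isChain_prefix hwj hl.isChain_suffix.tail
    have hpath : (n₁ ++ [w]) ++ (j :: m₂ ++ [c]) = (n ++ [u]) ++ (j :: m₂ ++ [c]) := by
      simpa using (hIC.2 i hi c hc hci.symm).unique hp hl
    exact (List.append_inj' (List.append_cancel_right hpath) rfl).2 |> List.singleton_inj.1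

end

theorem stmt9_general {V : Type*} (E : V → V → Prop) (inner : Set V)
    (hIC : ICStructure E inner)
    (h3 : ∀ u w, E u w → ∃ i ∈ inner, TreeEdge E inner i u w)
    (h4 : ∀ l : List V, ¬ IsOuterCycle E inner l) :
    (∀ i ∈ inner, ∀ j ∈ VNI E inner i, ¬ TreeEdge E inner i i j →
      Odd (Set.ncard {v | v ∈ VNI E inner i ∧ E v j})) ∧
    (∀ i ∈ inner, ∀ j, j ∉ TreeVert E inner i →
      Set.ncard {v | v ∈ VNI E inner i ∧ E v j} = 0) := by
  have hirr := irrefl_of_forall_treeEdge h3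
  refine ⟨fun i hi j hj hij => ?_, fun i hi j hj => ?_⟩
  · obtain ⟨u, hu⟩ := exists_setOf_mem_VNI_rel_eq_singleton hIC hirr h4 hi hj hij
    rw [hu, Set.ncard_singleton]
    exact odd_one
  · have hempty : {v | v ∈ VNI E inner i ∧ E v j} = ∅ :=
      Set.eq_empty_of_forall_notMem fun v ⟨hv, hvj⟩ =>
        hj (mem_treeVert_of_mem_VNI_of_rel hirr h4 hIC.1 h3 hi hv hvj)
    rw [hempty, Set.ncard_empty]

/-- in an IC structure without outer cycles (all four conditions),
conditions c1 and c2 hold automatically: every non-inner `j` at depth ≥ 2 in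
`T i` has `a i j` odd, and every `j` outside `T i` has `b i j = 0`. -/
theorem stmt9 {V : Type*} [Fintype V] (E : V → V → Prop) (inner : Set V)
    (hIC : ICStructure E inner)
    (h3 : ∀ u w, E u w → ∃ i ∈ inner, TreeEdge E inner i u w)
    (h4 : ∀ l : List V, ¬ IsOuterCycle E inner l) :
    (∀ i ∈ inner, ∀ j ∈ VNI E inner i, ¬ TreeEdge E inner i i j →
      Odd (Set.ncard {v | v ∈ VNI E inner i ∧ E v j})) ∧
    (∀ i ∈ inner, ∀ j, j ∉ TreeVert E inner i →
      Set.ncard {v | v ∈ VNI E inner i ∧ E v j} = 0) :=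
  stmt9_general E inner hIC h3 h4
end

section
/- In an IC structure, for each inner vertex i the union of the unique I-paths from i to all other inner vertices forms a tree rooted at i: every vertex of this union other than i has a unique predecessor, and there are no cycles in the union. -/
open scoped BigOperators

variable {V : Type*}

/-!
A vertex `w` on an I-path from `i` determines the part of that path before `w`. Take I-paths
from `i` to `b` and to `b'` reaching `w` after prefixes `p` and `p'`. If `p'` followed by the
tail of the first path from `w` on is still a path, it is an I-path from `i` to `b`, hence equal
to the first path, and `p = p'`. Otherwise `p'` meets that tail at some `x`; by induction on
`|p'|`, applied at `x`, the prefix of the first path before `x`, which contains `w`, is the part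
of `p'` before `x`, so `w` occurs twice on the second path.

Hence the position of a vertex on an I-path from `i` does not depend on the path, every tree
edge `u → v` forces `u` to be the vertex just before `v`, and the position rises by one along
tree edges, so the tree-edge relation is well founded and has no cycle.
-/

section

variable {E : V → V → Prop} {inner : Set V} {i b b' u v w : V} {p p' s s' : List V}

def IPathsUnique (E : V → V → Prop) (inner : Set V) (i : V) : Prop :=
  ∀ b ∈ inner, b ≠ i → {l | IsIPath E inner i b l}.Subsingleton

lemma ICStructure.iPathsUnique (hIC : ICStructure E inner) (hi : i ∈ inner) :
    IPathsUnique E inner i :=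
  fun b hb hbi _ hl _ hl' => (hIC.2 i hi b hb hbi.symm).unique hl hl'

lemma IsIPath.splice (h : IsIPath E inner i b (p ++ w :: s))
    (h' : IsIPath E inner i b' (p' ++ w :: s')) (hnd : (p' ++ w :: s).Nodup) :
    IsIPath E inner i b (p' ++ w :: s) := by
  obtain ⟨⟨hch, -⟩, -, hlast, hinner⟩ := h
  obtain ⟨⟨hch', hnd'⟩, hhead', hlast', hinner'⟩ := h'
  rw [List.getLast?_append_of_ne_nil _ (List.cons_ne_nil _ _)] at hlast hlast'
  refine ⟨⟨List.isChain_split.2 ⟨(List.isChain_split.1 hch').1, (List.isChain_split.1 hch).2⟩,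
    hnd⟩, by rw [← hhead']; cases p' <;> rfl, ?_, fun x hx hxi => ?_⟩
  · rwa [List.getLast?_append_of_ne_nil _ (List.cons_ne_nil _ _)]
  rcases List.mem_append.1 hx with hx | hx
  · refine (hinner' x (List.mem_append_left _ hx) hxi).imp_right fun hxb' => ?_
    exact absurd rfl ((List.nodup_append.1 hnd').2.2 x hx x (hxb' ▸ List.mem_of_getLast? hlast'))
  · exact hinner x (List.mem_append_right _ hx) hxi

theorem IsIPath.prefix_eq (hU : IPathsUnique E inner i) (hb : b ∈ inner) (hbi : b ≠ i)
    (h : IsIPath E inner i b (p ++ w :: s)) (h' : IsIPath E inner i b' (p' ++ w :: s')) :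
    p = p' := by
  induction hn : p'.length using Nat.strong_induction_on generalizing w p p' s s' with
  | _ n ih =>
  have hwp : w ∉ p ++ s := (List.nodup_cons.1 (List.nodup_middle.1 h.1.2)).1
  have hwp' : w ∉ p' ++ s' := (List.nodup_cons.1 (List.nodup_middle.1 h'.1.2)).1
  by_cases hnd : (p' ++ w :: s).Nodup
  · have hpath := hU b hb hbi h (h.splice h' hnd)
    exact ((List.append_cons_inj_of_notMem (fun hw => hwp (List.mem_append_left _ hw))
      (fun hw => hwp (List.mem_append_right _ hw))).1 hpath).1
  obtain ⟨x, hxp', hxs⟩ : ∃ x ∈ p', x ∈ s := by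
    by_contra! hdisj
    refine hnd (List.nodup_append.2 ⟨(List.nodup_append.1 h'.1.2).1,
      (List.nodup_append.1 h.1.2).2.1, ?_⟩)
    rintro x hx y hy rfl
    rcases List.mem_cons.1 hy with rfl | hy
    · exact hwp' (List.mem_append_left _ hx)
    · exact hdisj x hx hy
  obtain ⟨q', r', rfl⟩ := List.append_of_mem hxp'
  obtain ⟨q, r, rfl⟩ := List.append_of_mem hxs
  have hq : p ++ w :: q = q' :=
    ih q'.length (by simp [← hn]) (by simpa using h) (by simpa using h') rfl
  exact (hwp' (by simp [← hq])).elim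

lemma TreeEdge.left_unique (hU : IPathsUnique E inner i) {u' : V}
    (h : TreeEdge E inner i u v) (h' : TreeEdge E inner i u' v) : u = u' := by
  obtain ⟨b, hb, hbi, _, hl, l₁, l₂, rfl⟩ := h
  obtain ⟨b', -, -, _, hl', l₁', l₂', rfl⟩ := h'
  have hpre : l₁ ++ [u] = l₁' ++ [u'] :=
    IsIPath.prefix_eq hU hb hbi (by simpa using hl) (by simpa using hl')
  simpa using (List.append_inj' hpre rfl).2

lemma exists_treeEdge_of_mem_treeVert (hv : v ∈ TreeVert E inner i) (hvi : v ≠ i) :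
    ∃ u, TreeEdge E inner i u v := by
  obtain ⟨b, hb, hbi, l, hl, hvl⟩ := hv
  obtain ⟨p, s, rfl⟩ := List.append_of_mem hvl
  obtain rfl | ⟨q, u, rfl⟩ := p.eq_nil_or_concat
  · exact absurd (by simpa using hl.2.1) hvi
  · exact ⟨u, b, hb, hbi, _, hl, q, s, by simp⟩

noncomputable def treeDepth (E : V → V → Prop) (inner : Set V) (i v : V) : ℕ :=
  sInf {n | ∃ b ∈ inner, b ≠ i ∧ ∃ p s, IsIPath E inner i b (p ++ v :: s) ∧ p.length = n}

lemma treeDepth_eq_length (hU : IPathsUnique E inner i) (hb : b ∈ inner) (hbi : b ≠ i)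
    (h : IsIPath E inner i b (p ++ v :: s)) : treeDepth E inner i v = p.length := by
  refine le_antisymm (Nat.sInf_le ⟨b, hb, hbi, p, s, h, rfl⟩)
    (le_csInf ⟨_, b, hb, hbi, p, s, h, rfl⟩ ?_)
  rintro _ ⟨b', -, -, p', s', h', rfl⟩
  rw [h.prefix_eq hU hb hbi h']

lemma treeDepth_lt_of_treeEdge (hU : IPathsUnique E inner i) (h : TreeEdge E inner i u v) :
    treeDepth E inner i u < treeDepth E inner i v := by
  obtain ⟨b, hb, hbi, _, hl, l₁, l₂, rfl⟩ := h
  rw [treeDepth_eq_length hU hb hbi hl,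
    treeDepth_eq_length hU hb hbi (p := l₁ ++ [u]) (s := l₂) (by simpa using hl)]
  simp

lemma wellFounded_treeEdge (hU : IPathsUnique E inner i) : WellFounded (TreeEdge E inner i) :=
  Subrelation.wf (treeDepth_lt_of_treeEdge hU) (measure (treeDepth E inner i)).wf

lemma not_isDiCycle_of_wellFounded {R : V → V → Prop} (hR : WellFounded R) (l : List V) :
    ¬ IsDiCycle R l := by
  rintro ⟨hlen, -, hch, hclose⟩
  have hne : l ≠ [] := List.ne_nil_of_length_pos (by omega)
  exact hR.asymmetricₙ hne hch (hclose hne)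

end

theorem stmt12_general {V : Type*} (E : V → V → Prop) (inner : Set V)
    (hIC : ICStructure E inner)
    (i : V) (hi : i ∈ inner) :
    (∀ v ∈ TreeVert E inner i, v ≠ i → ∃! u, TreeEdge E inner i u v) ∧
    (∀ l : List V, ¬ IsDiCycle (TreeEdge E inner i) l) := by
  have hU := hIC.iPathsUnique hi
  refine ⟨fun v hv hvi => ?_, not_isDiCycle_of_wellFounded (wellFounded_treeEdge hU)⟩
  obtain ⟨u, hu⟩ := exists_treeEdge_of_mem_treeVert hv hvi
  exact ⟨u, hu, fun u' hu' => hu'.left_unique hU hu⟩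

/-- in an IC structure, for each inner vertex `i` the union of
the unique I-paths from `i` to the other inner vertices is an arborescence
rooted at `i`: every vertex of the union other than `i` has a unique
predecessor, and the union contains no cycle. -/
theorem stmt12 {V : Type*} [Fintype V] (E : V → V → Prop) (inner : Set V)
    (hIC : ICStructure E inner) (hK : 2 ≤ inner.ncard)
    (i : V) (hi : i ∈ inner) :
    (∀ v ∈ TreeVert E inner i, v ≠ i → ∃! u, TreeEdge E inner i u v) ∧
    (∀ l : List V, ¬ IsDiCycle (TreeEdge E inner i) l) :=
  stmt12_general E inner hIC i hi
end
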